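/- Consider the implicit time discretization of a scalar nonlinear ODE model of the homogenized heat balance: Ŝ(θ^{N+1}) (θ^{N+1} − θ^N)/Δt + K θ^{N+1} = h, where Ŝ : ℝ → [S̲, S̄] is Lipschitz with constant L_S, K > 0, h ∈ ℝ, and 0 < S̲ ≤ S̄. Then the fixed-point iteration θ_η defined by Ŝ(θ_{η−1})(θ_η − θ^N)/Δt + K θ_η = h is a contraction on a bounded invariant interval provided Δt is small enough (explicitly, when L_S · Δt · |h − K θ*|/(S̲(S̲ + K Δt)) < 1 for the relevant bound θ*), and hence converges to the unique solution θ^{N+1}. -/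

import Mathlib

open Filter

/-- Convergence of the linearized fixed-point iteration for the implicit time
step of the scalar nonlinear homogenized heat balance
`Ŝ(θ^{N+1})(θ^{N+1} − θ^N)/Δt + K θ^{N+1} = h`: the iteration map
`T(s) = (Ŝ(s) θ^N + Δt h)/(Ŝ(s) + K Δt)` is a contraction provided
`L_S Δt |h − K θ^N| / (S̲ (S̲ + K Δt)) < 1`, hence the iterates converge to the
unique solution `θ^{N+1}`. -/
theorem fixed_point_iteration_converges (S : ℝ → ℝ) (Slo Shi LS K h Δt θN : ℝ)
    (hSlo : 0 < Slo) (hSbd : ∀ s, Slo ≤ S s ∧ S s ≤ Shi)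
    (hLS : 0 ≤ LS) (hSLip : ∀ a b, |S a - S b| ≤ LS * |a - b|)
    (hK : 0 < K) (hΔt : 0 < Δt)
    (hq : LS * Δt * |h - K * θN| / (Slo * (Slo + K * Δt)) < 1) :
    (∀ a b : ℝ,
      |(S a * θN + Δt * h) / (S a + K * Δt) - (S b * θN + Δt * h) / (S b + K * Δt)|
        ≤ (LS * Δt * |h - K * θN| / (Slo * (Slo + K * Δt))) * |a - b|) ∧
    ∃ θnew : ℝ, (S θnew * (θnew - θN) / Δt + K * θnew = h) ∧
      (∀ θ' : ℝ, S θ' * (θ' - θN) / Δt + K * θ' = h → θ' = θnew) ∧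
      ∀ θ₀ : ℝ, Tendsto
        (fun η => (fun s => (S s * θN + Δt * h) / (S s + K * Δt))^[η] θ₀)
        atTop (nhds θnew) := by
  set T : ℝ → ℝ := fun s => (S s * θN + Δt * h) / (S s + K * Δt) with hT
  set q : ℝ := LS * Δt * |h - K * θN| / (Slo * (Slo + K * Δt)) with hqdef
  have hKΔt : 0 < K * Δt := mul_pos hK hΔt
  have hden : ∀ s : ℝ, 0 < S s + K * Δt := fun s =>
    lt_of_lt_of_le (by linarith [(hSbd s).1]) le_rfl
  have hden' : ∀ s : ℝ, Slo + K * Δt ≤ S s + K * Δt := fun s => by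
    linarith [(hSbd s).1]
  have hSloK : 0 < Slo * (Slo + K * Δt) := mul_pos hSlo (by linarith)
  have hq0 : 0 ≤ q := by
    apply div_nonneg _ hSloK.le
    positivity
  -- Lipschitz estimate
  have hlip : ∀ a b : ℝ, |T a - T b| ≤ q * |a - b| := by
    intro a b
    have hda := (hden a).ne'
    have hdb := (hden b).ne'
    have key : T a - T b =
        (-(Δt * (h - K * θN) * (S a - S b))) / ((S a + K * Δt) * (S b + K * Δt)) := by
      simp only [hT]
      rw [div_sub_div _ _ hda hdb]
      ring
    rw [key, abs_div, abs_neg]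
    have hnum : |Δt * (h - K * θN) * (S a - S b)| ≤ Δt * |h - K * θN| * (LS * |a - b|) := by
      rw [abs_mul, abs_mul, abs_of_pos hΔt]
      have := hSLip a b
      have h1 : 0 ≤ Δt * |h - K * θN| := by positivity
      exact mul_le_mul_of_nonneg_left this h1
    have hdenge : Slo * (Slo + K * Δt) ≤ |(S a + K * Δt) * (S b + K * Δt)| := by
      rw [abs_of_pos (mul_pos (hden a) (hden b))]
      have h1 : Slo ≤ S a + K * Δt := by linarith [(hSbd a).1]
      have h2 : Slo + K * Δt ≤ S b + K * Δt := hden' b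
      exact mul_le_mul h1 h2 (by linarith) (hden a).le
    have step : |Δt * (h - K * θN) * (S a - S b)| / |(S a + K * Δt) * (S b + K * Δt)|
        ≤ (Δt * |h - K * θN| * (LS * |a - b|)) / (Slo * (Slo + K * Δt)) :=
      div_le_div₀ (by positivity) hnum hSloK hdenge
    have : (Δt * |h - K * θN| * (LS * |a - b|)) / (Slo * (Slo + K * Δt)) = q * |a - b| := by
      rw [hqdef]; ring
    linarith
  refine ⟨hlip, ?_⟩
  -- contraction
  have hct : ContractingWith ⟨q, hq0⟩ T := by
    refine ⟨by exact_mod_cast hq, LipschitzWith.of_dist_le_mul fun a b => ?_⟩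
    rw [Real.dist_eq, Real.dist_eq]
    exact hlip a b
  -- fixed point equation equivalence
  have heq : ∀ θ : ℝ, (S θ * (θ - θN) / Δt + K * θ = h) ↔ T θ = θ := by
    intro θ
    have hd := (hden θ).ne'
    have hΔt' := hΔt.ne'
    simp only [hT]
    rw [div_eq_iff hd]
    constructor
    · intro H
      have : S θ * (θ - θN) + K * θ * Δt = h * Δt := by
        field_simp at H
        linarith
      nlinarith [this]
    · intro H
      have : S θ * (θ - θN) = Δt * h - K * θ * Δt := by nlinarith
      field_simp
      nlinarith [this]
  refine ⟨hct.fixedPoint T, ?_, ?_, ?_⟩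
  · exact (heq _).2 hct.fixedPoint_isFixedPt
  · intro θ' hθ'
    exact hct.fixedPoint_unique ((heq θ').1 hθ')
  · intro θ₀
    exact hct.tendsto_iterate_fixedPoint θ₀
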